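/- arXiv:2306.00632 — 4 statements merged into one kernel-verified Lean document; each statement's English description precedes it below -/
import Mathlib

section
/- If C is a matrix in Tucker format C = Σ_{i1,...,id} [G_C]_{i1,...,id} C_{(d,i_d)} ⊗ ... ⊗ C_{(1,i_1)} with multilinear rank (R_1,...,R_d), and x = vec(G_X ×_d A_d ... ×_1 A_1) is a Tucker vector of multilinear rank (r_1,...,r_d), then C x is a Tucker vector of multilinear rank at most (R_1 r_1, ..., R_d r_d), with core G_C ⊗ G_X and factor matrices [C_{(k,1)}A_k, ..., C_{(k,R_k)}A_k]. -/
open Finset Matrix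

/-- Tucker tensor with core `G` and factor matrices `A_k`. -/
def tucker {d : ℕ} {n : Fin d → ℕ} {ι : Fin d → Type*} [∀ k, Fintype (ι k)]
    (G : (∀ k, ι k) → ℝ) (A : ∀ k, Matrix (Fin (n k)) (ι k) ℝ) : (∀ k, Fin (n k)) → ℝ :=
  fun i => ∑ j, G j * ∏ k, A k (i k) (j k)

/-- Tucker matrix `C = Σ_{i_1,…,i_d} [G_C]_{i_1,…,i_d} C_{(d,i_d)} ⊗ ⋯ ⊗ C_{(1,i_1)}`. -/
def tuckerMatrix {d : ℕ} {n R : Fin d → ℕ}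
    (GC : (∀ k, Fin (R k)) → ℝ) (C : ∀ k, Fin (R k) → Matrix (Fin (n k)) (Fin (n k)) ℝ) :
    Matrix (∀ k, Fin (n k)) (∀ k, Fin (n k)) ℝ :=
  Matrix.of fun a b => ∑ i, GC i * ∏ k, C k (i k) (a k) (b k)

def piProdEquiv {d : ℕ} {α β : Fin d → Type*} :
    ((∀ k, α k) × (∀ k, β k)) ≃ (∀ k, α k × β k) where
  toFun p k := (p.1 k, p.2 k)
  invFun f := (fun k => (f k).1, fun k => (f k).2)
  left_inv _ := rfl
  right_inv _ := rfl

/-- A Tucker matrix of multilinear rank `(R_1,…,R_d)` times a Tucker vector of multilinear rank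
`(r_1,…,r_d)` is a Tucker vector of multilinear rank at most `(R_1 r_1, …, R_d r_d)`, with core
the Kronecker product `G_C ⊗ G_X` and factor matrices `[C_{(k,1)}A_k, …, C_{(k,R_k)}A_k]`. -/
theorem tuckerMatrix_mulVec_tucker {d : ℕ} {n R r : Fin d → ℕ}
    (GC : (∀ k, Fin (R k)) → ℝ) (C : ∀ k, Fin (R k) → Matrix (Fin (n k)) (Fin (n k)) ℝ)
    (GX : (∀ k, Fin (r k)) → ℝ) (A : ∀ k, Matrix (Fin (n k)) (Fin (r k)) ℝ) :
    (tuckerMatrix GC C).mulVec (tucker GX A)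
      = tucker (ι := fun k => Fin (R k) × Fin (r k))
          (fun jl => GC (fun k => (jl k).1) * GX (fun k => (jl k).2))
          (fun k => Matrix.of fun i jl => (C k jl.1 * A k) i jl.2) := by
  funext a
  simp only [tuckerMatrix, tucker, Matrix.mulVec, Matrix.of_apply, dotProduct,
    Matrix.mul_apply]
  have key : ∀ (i : ∀ k, Fin (R k)) (j : ∀ k, Fin (r k)),
      ∑ b : ∀ k, Fin (n k),
          (GC i * ∏ k, C k (i k) (a k) (b k)) * (GX j * ∏ k, A k (b k) (j k))
        = GC i * GX j * ∏ k, ∑ b, C k (i k) (a k) b * A k b (j k) := by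
    intro i j
    rw [Fintype.prod_sum, mul_sum]
    apply Finset.sum_congr rfl
    intro b _
    rw [Finset.prod_mul_distrib]
    ring
  have hL : (∑ b : ∀ k, Fin (n k),
        (∑ i, GC i * ∏ k, C k (i k) (a k) (b k)) * ∑ j, GX j * ∏ k, A k (b k) (j k))
      = ∑ i : ∀ k, Fin (R k), ∑ j : ∀ k, Fin (r k),
          GC i * GX j * ∏ k, ∑ b, C k (i k) (a k) b * A k b (j k) := by
    have step : ∀ b : ∀ k, Fin (n k),
        (∑ i, GC i * ∏ k, C k (i k) (a k) (b k)) * ∑ j, GX j * ∏ k, A k (b k) (j k)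
          = ∑ i : ∀ k, Fin (R k), ∑ j : ∀ k, Fin (r k),
              (GC i * ∏ k, C k (i k) (a k) (b k)) * (GX j * ∏ k, A k (b k) (j k)) := by
      intro b
      rw [Finset.sum_mul]
      exact Finset.sum_congr rfl fun i _ => Finset.mul_sum _ _ _
    rw [Finset.sum_congr rfl fun b _ => step b, Finset.sum_comm]
    refine Finset.sum_congr rfl fun i _ => ?_
    rw [Finset.sum_comm]
    exact Finset.sum_congr rfl fun j _ => key i j
  rw [hL, ← Equiv.sum_comp piProdEquiv, Fintype.sum_prod_type]
  exact Finset.sum_congr rfl fun i _ => Finset.sum_congr rfl fun j _ => rfl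
end

section
/- Given Y with factor matrices Y_i and QR factorizations Y_i = Q_i R_i with Q_i orthogonal (Q_i^T Q_i = I), if Z := G_Y ×_d R_d ... ×_1 R_1 and Z̃ is an approximation with ‖Z − Z̃‖_F ≤ ε ‖Z‖_F, then Ỹ := Z̃ ×_d Q_d ... ×_1 Q_1 satisfies ‖Y − Ỹ‖_F ≤ ε ‖Y‖_F (where Y = G_Y ×_d Y_d ... ×_1 Y_1). -/
open Finset Matrix

/-- Frobenius norm of a tensor. -/
noncomputable def frob {d : ℕ} {n : Fin d → ℕ} (X : (∀ k, Fin (n k)) → ℝ) : ℝ :=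
  Real.sqrt (∑ i, X i ^ 2)

lemma tucker_sub {d : ℕ} {n r : Fin d → ℕ}
    (G H : (∀ k, Fin (r k)) → ℝ) (A : ∀ k, Matrix (Fin (n k)) (Fin (r k)) ℝ) :
    tucker G A - tucker H A = tucker (G - H) A := by
  funext i
  simp [tucker, ← Finset.sum_sub_distrib, sub_mul]

lemma tucker_comp {d : ℕ} {n r : Fin d → ℕ}
    (G : (∀ k, Fin (r k)) → ℝ) (Q : ∀ k, Matrix (Fin (n k)) (Fin (r k)) ℝ)
    (Rm : ∀ k, Matrix (Fin (r k)) (Fin (r k)) ℝ) :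
    tucker G (fun k => Q k * Rm k) = tucker (tucker G Rm) Q := by
  funext i
  simp only [tucker, Matrix.mul_apply, Finset.sum_mul, Finset.mul_sum]
  rw [Finset.sum_comm]
  congr 1; funext j
  rw [Fintype.prod_sum fun k a => Q k (i k) a * Rm k a (j k)]
  rw [Finset.mul_sum]
  congr 1; funext x
  rw [Finset.prod_mul_distrib]
  ring

lemma frob_tucker_orth {d : ℕ} {n r : Fin d → ℕ}
    (G : (∀ k, Fin (r k)) → ℝ) (Q : ∀ k, Matrix (Fin (n k)) (Fin (r k)) ℝ)
    (hQ : ∀ k, (Q k)ᵀ * Q k = 1) :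
    frob (tucker G Q) = frob G := by
  have key : ∀ (j j' : ∀ k, Fin (r k)),
      (∑ i : ∀ k, Fin (n k), ∏ k, Q k (i k) (j k) * Q k (i k) (j' k))
        = if j = j' then (1:ℝ) else 0 := by
    intro j j'
    rw [← Fintype.prod_sum fun k a => Q k a (j k) * Q k a (j' k)]
    have : ∀ k, (∑ a, Q k a (j k) * Q k a (j' k)) = if j k = j' k then (1:ℝ) else 0 := by
      intro k
      have := congrFun (congrFun (hQ k) (j k)) (j' k)
      simpa [Matrix.mul_apply, Matrix.one_apply, Matrix.transpose_apply] using this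
    rw [Finset.prod_congr rfl fun k _ => this k, Finset.prod_boole]
    simp [funext_iff]
  unfold frob
  congr 1
  calc ∑ i, tucker G Q i ^ 2
      = ∑ i : ∀ k, Fin (n k), ∑ j, ∑ j', (G j * G j') *
          ∏ k, Q k (i k) (j k) * Q k (i k) (j' k) := by
        refine Finset.sum_congr rfl fun i _ => ?_
        rw [tucker, sq, Finset.sum_mul_sum]
        refine Finset.sum_congr rfl fun j _ => Finset.sum_congr rfl fun j' _ => ?_
        rw [Finset.prod_mul_distrib]; ring
    _ = ∑ j, ∑ j', (G j * G j') *
          ∑ i : ∀ k, Fin (n k), ∏ k, Q k (i k) (j k) * Q k (i k) (j' k) := by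
        rw [Finset.sum_comm]
        refine Finset.sum_congr rfl fun j _ => ?_
        rw [Finset.sum_comm]
        refine Finset.sum_congr rfl fun j' _ => ?_
        rw [Finset.mul_sum]
    _ = ∑ j, G j ^ 2 := by
        refine Finset.sum_congr rfl fun j _ => ?_
        simp only [key]
        simp [mul_ite, sq]

/-- If `Y = G_Y ×_d Y_d ⋯ ×_1 Y_1` with QR factorizations `Y_i = Q_i R_i` (`Q_i` with
orthonormal columns), `Z := G_Y ×_d R_d ⋯ ×_1 R_1` and `Z̃` satisfies
`‖Z − Z̃‖_F ≤ ε ‖Z‖_F`, then `Ỹ := Z̃ ×_d Q_d ⋯ ×_1 Q_1` satisfies `‖Y − Ỹ‖_F ≤ ε ‖Y‖_F`. -/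
theorem truncation_relative_error {d : ℕ} {n r : Fin d → ℕ} (ε : ℝ)
    (G : (∀ k, Fin (r k)) → ℝ)
    (Y Q : ∀ k, Matrix (Fin (n k)) (Fin (r k)) ℝ)
    (Rm : ∀ k, Matrix (Fin (r k)) (Fin (r k)) ℝ)
    (hQR : ∀ k, Y k = Q k * Rm k)
    (hQ : ∀ k, (Q k)ᵀ * Q k = 1)
    (Zt : (∀ k, Fin (r k)) → ℝ)
    (hZ : frob (tucker G Rm - Zt) ≤ ε * frob (tucker G Rm)) :
    frob (tucker G Y - tucker Zt Q) ≤ ε * frob (tucker G Y) := by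
  have hY : tucker G Y = tucker (tucker G Rm) Q := by
    rw [show Y = fun k => Q k * Rm k from funext hQR, tucker_comp]
  rw [hY, tucker_sub, frob_tucker_orth _ _ hQ, frob_tucker_orth _ _ hQ]
  exact hZ
end

section
/- Under the same hypotheses, the inverse of P = K_3⊗M_2⊗M_1 + M_3⊗K_2⊗M_1 + M_3⊗M_2⊗K_1 is P^{-1} = (U_3⊗U_2⊗U_1) (I⊗I⊗Λ_1 + I⊗Λ_2⊗I + Λ_3⊗I⊗I)^{-1} (U_3⊗U_2⊗U_1)^T, provided all diagonal entries λ^{(1)}_{i} + λ^{(2)}_{j} + λ^{(3)}_{k} are nonzero. -/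
open Matrix Kronecker

/-- Inverse of the Fast Diagonalization preconditioner: under the generalized
eigendecompositions `K_i U_i = M_i U_i Λ_i`, `U_iᵀ M_i U_i = I`, with `Λ_i = diag(λ^{(i)})`
and all sums `λ^{(1)}_i + λ^{(2)}_j + λ^{(3)}_k` nonzero,
`P⁻¹ = (U_3⊗U_2⊗U_1) (I⊗I⊗Λ_1 + I⊗Λ_2⊗I + Λ_3⊗I⊗I)⁻¹ (U_3⊗U_2⊗U_1)ᵀ`. -/
theorem fast_diagonalization_inverse {n1 n2 n3 : ℕ}
    (M1 K1 U1 : Matrix (Fin n1) (Fin n1) ℝ)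
    (M2 K2 U2 : Matrix (Fin n2) (Fin n2) ℝ)
    (M3 K3 U3 : Matrix (Fin n3) (Fin n3) ℝ)
    (l1 : Fin n1 → ℝ) (l2 : Fin n2 → ℝ) (l3 : Fin n3 → ℝ)
    (hM1 : M1.PosDef) (hM2 : M2.PosDef) (hM3 : M3.PosDef)
    (hK1 : K1.IsSymm) (hK2 : K2.IsSymm) (hK3 : K3.IsSymm)
    (he1 : K1 * U1 = M1 * U1 * Matrix.diagonal l1)
    (he2 : K2 * U2 = M2 * U2 * Matrix.diagonal l2)
    (he3 : K3 * U3 = M3 * U3 * Matrix.diagonal l3)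
    (ho1 : U1ᵀ * M1 * U1 = 1) (ho2 : U2ᵀ * M2 * U2 = 1) (ho3 : U3ᵀ * M3 * U3 = 1)
    (hnz : ∀ (i : Fin n1) (j : Fin n2) (k : Fin n3), l1 i + l2 j + l3 k ≠ 0) :
    (K3 ⊗ₖ M2 ⊗ₖ M1 + M3 ⊗ₖ K2 ⊗ₖ M1 + M3 ⊗ₖ M2 ⊗ₖ K1)⁻¹
      = (U3 ⊗ₖ U2 ⊗ₖ U1) *
          ((1 : Matrix (Fin n3) (Fin n3) ℝ) ⊗ₖ (1 : Matrix (Fin n2) (Fin n2) ℝ)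
              ⊗ₖ Matrix.diagonal l1
            + (1 : Matrix (Fin n3) (Fin n3) ℝ) ⊗ₖ Matrix.diagonal l2
              ⊗ₖ (1 : Matrix (Fin n1) (Fin n1) ℝ)
            + Matrix.diagonal l3 ⊗ₖ (1 : Matrix (Fin n2) (Fin n2) ℝ)
              ⊗ₖ (1 : Matrix (Fin n1) (Fin n1) ℝ))⁻¹ *
          (U3 ⊗ₖ U2 ⊗ₖ U1)ᵀ := by
  set W : Matrix ((Fin n3 × Fin n2) × Fin n1) ((Fin n3 × Fin n2) × Fin n1) ℝ :=
    U3 ⊗ₖ U2 ⊗ₖ U1 with hW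
  set Mk : Matrix ((Fin n3 × Fin n2) × Fin n1) ((Fin n3 × Fin n2) × Fin n1) ℝ :=
    M3 ⊗ₖ M2 ⊗ₖ M1 with hMk
  set d : (Fin n3 × Fin n2) × Fin n1 → ℝ :=
    fun p => l1 p.2 + l2 p.1.2 + l3 p.1.1 with hd
  set D : Matrix ((Fin n3 × Fin n2) × Fin n1) ((Fin n3 × Fin n2) × Fin n1) ℝ :=
    (1 : Matrix (Fin n3) (Fin n3) ℝ) ⊗ₖ (1 : Matrix (Fin n2) (Fin n2) ℝ)
        ⊗ₖ Matrix.diagonal l1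
      + (1 : Matrix (Fin n3) (Fin n3) ℝ) ⊗ₖ Matrix.diagonal l2
        ⊗ₖ (1 : Matrix (Fin n1) (Fin n1) ℝ)
      + Matrix.diagonal l3 ⊗ₖ (1 : Matrix (Fin n2) (Fin n2) ℝ)
        ⊗ₖ (1 : Matrix (Fin n1) (Fin n1) ℝ) with hDdef
  have hDdiag : D = Matrix.diagonal d := by
    rw [hDdef, hd]
    simp only [← Matrix.diagonal_one, Matrix.diagonal_kronecker_diagonal,
      ← Matrix.diagonal_add]
    congr 1
    funext p
    simp
    ring
  -- D is invertible with diagonal inverse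
  have hdet : D.det ≠ 0 := by
    rw [hDdiag, Matrix.det_diagonal]
    rw [Finset.prod_ne_zero_iff]
    intro p _
    exact hnz p.2 p.1.2 p.1.1
  have hDinv : D * D⁻¹ = 1 := Matrix.mul_nonsing_inv D (isUnit_iff_ne_zero.mpr hdet)
  -- P * W = Mk * W * D
  have e3 : (K3 ⊗ₖ M2 ⊗ₖ M1) * W
      = Mk * W * (Matrix.diagonal l3 ⊗ₖ (1 : Matrix (Fin n2) (Fin n2) ℝ)
          ⊗ₖ (1 : Matrix (Fin n1) (Fin n1) ℝ)) := by
    rw [hW, hMk]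
    simp only [← Matrix.mul_kronecker_mul, Matrix.mul_one]
    rw [he3]
  have e2 : (M3 ⊗ₖ K2 ⊗ₖ M1) * W
      = Mk * W * ((1 : Matrix (Fin n3) (Fin n3) ℝ) ⊗ₖ Matrix.diagonal l2
          ⊗ₖ (1 : Matrix (Fin n1) (Fin n1) ℝ)) := by
    rw [hW, hMk]
    simp only [← Matrix.mul_kronecker_mul, Matrix.mul_one]
    rw [he2]
  have e1 : (M3 ⊗ₖ M2 ⊗ₖ K1) * W
      = Mk * W * ((1 : Matrix (Fin n3) (Fin n3) ℝ) ⊗ₖ (1 : Matrix (Fin n2) (Fin n2) ℝ)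
          ⊗ₖ Matrix.diagonal l1) := by
    rw [hW, hMk]
    simp only [← Matrix.mul_kronecker_mul, Matrix.mul_one]
    rw [he1]
  have hPW : (K3 ⊗ₖ M2 ⊗ₖ M1 + M3 ⊗ₖ K2 ⊗ₖ M1 + M3 ⊗ₖ M2 ⊗ₖ K1) * W = Mk * W * D := by
    rw [Matrix.add_mul, Matrix.add_mul, e1, e2, e3, hDdef]
    rw [Matrix.mul_add, Matrix.mul_add]
    abel
  -- orthogonality : Wᵀ * Mk * W = 1
  have hWT : Wᵀ = U3ᵀ ⊗ₖ U2ᵀ ⊗ₖ U1ᵀ := by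
    rw [hW, Matrix.kroneckerMap_transpose, Matrix.kroneckerMap_transpose]
  have hWMW : Wᵀ * Mk * W = 1 := by
    rw [hWT, hW, hMk]
    simp only [← Matrix.mul_kronecker_mul]
    rw [Matrix.mul_assoc U3ᵀ, Matrix.mul_assoc U2ᵀ, Matrix.mul_assoc U1ᵀ,
      ← Matrix.mul_assoc U3ᵀ, ← Matrix.mul_assoc U2ᵀ, ← Matrix.mul_assoc U1ᵀ,
      ho1, ho2, ho3]
    simp [Matrix.one_kronecker_one]
  -- Mk * (W * Wᵀ) = 1
  have hMkWWT : Mk * (W * Wᵀ) = 1 := by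
    have h1 : (Wᵀ * Mk) * W = 1 := by rw [Matrix.mul_assoc] at hWMW ⊢; exact hWMW
    have h2 : W * (Wᵀ * Mk) = 1 := mul_eq_one_comm.mp h1
    have h3 : (W * Wᵀ) * Mk = 1 := by
      rw [Matrix.mul_assoc]; exact h2
    exact mul_eq_one_comm.mp h3
  -- right inverse
  apply Matrix.inv_eq_right_inv
  calc (K3 ⊗ₖ M2 ⊗ₖ M1 + M3 ⊗ₖ K2 ⊗ₖ M1 + M3 ⊗ₖ M2 ⊗ₖ K1) * (W * D⁻¹ * Wᵀ)
      = ((K3 ⊗ₖ M2 ⊗ₖ M1 + M3 ⊗ₖ K2 ⊗ₖ M1 + M3 ⊗ₖ M2 ⊗ₖ K1) * W) * (D⁻¹ * Wᵀ) := by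
        rw [Matrix.mul_assoc, Matrix.mul_assoc]
    _ = Mk * W * D * (D⁻¹ * Wᵀ) := by rw [hPW]
    _ = Mk * W * (D * D⁻¹) * Wᵀ := by
        simp only [Matrix.mul_assoc]
    _ = Mk * (W * Wᵀ) := by rw [hDinv, Matrix.mul_one, Matrix.mul_assoc]
    _ = 1 := hMkWWT
end

section
/- Let Λ_1, Λ_2, Λ_3 be diagonal matrices with positive diagonals, λ_min = Σ_i min(Λ_i), λ_max = Σ_i max(Λ_i), and let D = (I⊗I⊗Λ_1 + I⊗Λ_2⊗I + Λ_3⊗I⊗I)^{-1}. If s_R(λ) = Σ_j ω_j exp(−α_j λ) approximates 1/λ on [1, λ_max/λ_min] with error at most ε λ_min/λ_max, then D̃ := (1/λ_min) Σ_j ω_j D_{(3,j)}⊗D_{(2,j)}⊗D_{(1,j)}, where [D_{(i,j)}]_{mm} = exp(−(α_j/λ_min)[Λ_i]_{mm}), satisfies ‖D^{-1}‖_∞ ‖D − D̃‖_∞ ≤ ε. -/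
open Matrix Finset Kronecker

/-- The maximum-row-sum (infinity) matrix norm. -/
noncomputable def matInfNorm {m : Type*} [Fintype m] [Nonempty m] (A : Matrix m m ℝ) : ℝ :=
  Finset.univ.sup' Finset.univ_nonempty fun i => ∑ j, |A i j|

lemma matInfNorm_diagonal' {m : Type*} [Fintype m] [Nonempty m] [DecidableEq m] (d : m → ℝ) :
    matInfNorm (Matrix.diagonal d) = Finset.univ.sup' Finset.univ_nonempty fun i => |d i| := by
  unfold matInfNorm
  congr 1
  funext i
  have : ∀ j, |Matrix.diagonal d i j| = if i = j then |d i| else 0 := by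
    intro j
    by_cases h : i = j <;> simp [Matrix.diagonal, h]
  simp only [this, Finset.sum_ite_eq, Finset.mem_univ, if_true]

lemma matInfNorm_nonneg {m : Type*} [Fintype m] [Nonempty m] (A : Matrix m m ℝ) :
    0 ≤ matInfNorm A := by
  obtain ⟨i⟩ := (inferInstance : Nonempty m)
  exact le_trans (Finset.sum_nonneg fun j _ => abs_nonneg _)
    (Finset.le_sup' (fun i => ∑ j, |A i j|) (Finset.mem_univ i))


/-- Low-rank approximation of the inverse Kronecker-sum diagonal matrix: if the exponential
sum `s_R` approximates `1/μ` on `[1, λ_max/λ_min]` with error at most `ε λ_min/λ_max`, then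
`D̃ := (1/λ_min) Σ_j ω_j D_{(3,j)} ⊗ D_{(2,j)} ⊗ D_{(1,j)}` with
`[D_{(i,j)}]_{mm} = exp(−(α_j/λ_min)[Λ_i]_{mm})` satisfies `‖D⁻¹‖_∞ ‖D − D̃‖_∞ ≤ ε`, where
`D = (I⊗I⊗Λ_1 + I⊗Λ_2⊗I + Λ_3⊗I⊗I)⁻¹`. -/
theorem kronecker_sum_inverse_approx {n1 n2 n3 : ℕ}
    [Nonempty (Fin n1)] [Nonempty (Fin n2)] [Nonempty (Fin n3)]
    (l1 : Fin n1 → ℝ) (l2 : Fin n2 → ℝ) (l3 : Fin n3 → ℝ)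
    (h1 : ∀ i, 0 < l1 i) (h2 : ∀ i, 0 < l2 i) (h3 : ∀ i, 0 < l3 i)
    (lmin lmax : ℝ)
    (hmin : lmin = univ.inf' univ_nonempty l1 + univ.inf' univ_nonempty l2
        + univ.inf' univ_nonempty l3)
    (hmax : lmax = univ.sup' univ_nonempty l1 + univ.sup' univ_nonempty l2
        + univ.sup' univ_nonempty l3)
    (R : ℕ) (ω α : Fin R → ℝ) (ε : ℝ)
    (happrox : ∀ μ ∈ Set.Icc (1 : ℝ) (lmax / lmin),
      |1 / μ - ∑ j, ω j * Real.exp (-α j * μ)| ≤ ε * lmin / lmax)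
    (D Dt : Matrix ((Fin n3 × Fin n2) × Fin n1) ((Fin n3 × Fin n2) × Fin n1) ℝ)
    (hD : D = ((1 : Matrix (Fin n3) (Fin n3) ℝ) ⊗ₖ (1 : Matrix (Fin n2) (Fin n2) ℝ)
          ⊗ₖ Matrix.diagonal l1
        + (1 : Matrix (Fin n3) (Fin n3) ℝ) ⊗ₖ Matrix.diagonal l2
          ⊗ₖ (1 : Matrix (Fin n1) (Fin n1) ℝ)
        + Matrix.diagonal l3 ⊗ₖ (1 : Matrix (Fin n2) (Fin n2) ℝ)
          ⊗ₖ (1 : Matrix (Fin n1) (Fin n1) ℝ))⁻¹)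
    (hDt : Dt = (1 / lmin) • ∑ j, ω j •
        ((Matrix.diagonal fun m => Real.exp (-(α j / lmin) * l3 m))
          ⊗ₖ (Matrix.diagonal fun m => Real.exp (-(α j / lmin) * l2 m))
          ⊗ₖ (Matrix.diagonal fun m => Real.exp (-(α j / lmin) * l1 m)))) :
    matInfNorm D⁻¹ * matInfNorm (D - Dt) ≤ ε := by
  set σ : (Fin n3 × Fin n2) × Fin n1 → ℝ := fun p => l3 p.1.1 + l2 p.1.2 + l1 p.2 with hσ
  have hσpos : ∀ p, 0 < σ p := fun p => by
    have := h1 p.2; have := h2 p.1.2; have := h3 p.1.1; simp only [hσ]; linarith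
  have hσmin : ∀ p, lmin ≤ σ p := fun p => by
    have a1 := Finset.inf'_le l1 (Finset.mem_univ p.2)
    have a2 := Finset.inf'_le l2 (Finset.mem_univ p.1.2)
    have a3 := Finset.inf'_le l3 (Finset.mem_univ p.1.1)
    simp only [hσ, hmin]; linarith
  have hσmax : ∀ p, σ p ≤ lmax := fun p => by
    have a1 := Finset.le_sup' l1 (Finset.mem_univ p.2)
    have a2 := Finset.le_sup' l2 (Finset.mem_univ p.1.2)
    have a3 := Finset.le_sup' l3 (Finset.mem_univ p.1.1)
    simp only [hσ, hmax]; linarith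
  have hlmin : 0 < lmin := by
    rw [hmin]
    have b1 : (0:ℝ) < Finset.univ.inf' Finset.univ_nonempty l1 :=
      (Finset.lt_inf'_iff _).2 fun i _ => h1 i
    have b2 : (0:ℝ) < Finset.univ.inf' Finset.univ_nonempty l2 :=
      (Finset.lt_inf'_iff _).2 fun i _ => h2 i
    have b3 : (0:ℝ) < Finset.univ.inf' Finset.univ_nonempty l3 :=
      (Finset.lt_inf'_iff _).2 fun i _ => h3 i
    linarith
  have hlmax : 0 < lmax :=
    lt_of_lt_of_le hlmin (le_trans (hσmin (Classical.arbitrary _)) (hσmax _))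
  have hS : ((1 : Matrix (Fin n3) (Fin n3) ℝ) ⊗ₖ (1 : Matrix (Fin n2) (Fin n2) ℝ)
          ⊗ₖ Matrix.diagonal l1
        + (1 : Matrix (Fin n3) (Fin n3) ℝ) ⊗ₖ Matrix.diagonal l2
          ⊗ₖ (1 : Matrix (Fin n1) (Fin n1) ℝ)
        + Matrix.diagonal l3 ⊗ₖ (1 : Matrix (Fin n2) (Fin n2) ℝ)
          ⊗ₖ (1 : Matrix (Fin n1) (Fin n1) ℝ)) = Matrix.diagonal σ := by
    rw [show (1 : Matrix (Fin n3) (Fin n3) ℝ) = Matrix.diagonal (fun _ => 1) from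
        (Matrix.diagonal_one).symm,
      show (1 : Matrix (Fin n2) (Fin n2) ℝ) = Matrix.diagonal (fun _ => 1) from
        (Matrix.diagonal_one).symm,
      show (1 : Matrix (Fin n1) (Fin n1) ℝ) = Matrix.diagonal (fun _ => 1) from
        (Matrix.diagonal_one).symm]
    simp only [Matrix.diagonal_kronecker_diagonal, Matrix.diagonal_add]
    exact congrArg Matrix.diagonal (funext fun p => by simp only [hσ]; ring)
  have hD' : D = Matrix.diagonal (fun p => (σ p)⁻¹) := by
    rw [hD, hS]
    apply Matrix.inv_eq_right_inv
    rw [Matrix.diagonal_mul_diagonal]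
    rw [show (fun i => σ i * (σ i)⁻¹) = fun _ => (1:ℝ) from
      funext fun i => mul_inv_cancel₀ (hσpos i).ne']
    exact Matrix.diagonal_one
  have hDinv : D⁻¹ = Matrix.diagonal σ := by
    rw [hD']
    apply Matrix.inv_eq_right_inv
    rw [Matrix.diagonal_mul_diagonal]
    rw [show (fun i => (σ i)⁻¹ * σ i) = fun _ => (1:ℝ) from
      funext fun i => inv_mul_cancel₀ (hσpos i).ne']
    exact Matrix.diagonal_one
  have hDt' : Dt = Matrix.diagonal
      (fun p => (1 / lmin) * ∑ j, ω j * Real.exp (-α j * (σ p / lmin))) := by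
    rw [hDt]
    have hterm : ∀ j : Fin R,
        ((Matrix.diagonal fun m => Real.exp (-(α j / lmin) * l3 m))
          ⊗ₖ (Matrix.diagonal fun m => Real.exp (-(α j / lmin) * l2 m))
          ⊗ₖ (Matrix.diagonal fun m => Real.exp (-(α j / lmin) * l1 m)))
        = Matrix.diagonal (fun p => Real.exp (-α j * (σ p / lmin))) := by
      intro j
      simp only [Matrix.diagonal_kronecker_diagonal]
      refine congrArg Matrix.diagonal (funext fun p => ?_)
      rw [← Real.exp_add, ← Real.exp_add]
      congr 1
      simp only [hσ]
      ring
    simp only [hterm]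
    have hsum : ∑ j, ω j • Matrix.diagonal (fun p => Real.exp (-α j * (σ p / lmin)))
        = Matrix.diagonal (fun p => ∑ j, ω j * Real.exp (-α j * (σ p / lmin))) := by
      ext p q
      by_cases h : p = q
      · subst h
        simp [Matrix.sum_apply, Matrix.diagonal]
      · simp [Matrix.sum_apply, Matrix.diagonal, h]
    rw [hsum, ← Matrix.diagonal_smul]
    exact congrArg Matrix.diagonal (funext fun p => rfl)
  have hnorm1 : matInfNorm D⁻¹ ≤ lmax := by
    rw [hDinv, matInfNorm_diagonal']
    apply Finset.sup'_le
    intro p _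
    rw [abs_of_pos (hσpos p)]
    exact hσmax p
  have key : ∀ p, |(σ p)⁻¹ - (1 / lmin) * ∑ j, ω j * Real.exp (-α j * (σ p / lmin))|
      ≤ ε / lmax := by
    intro p
    set μ := σ p / lmin with hμdef
    have hμ1 : 1 ≤ μ := (one_le_div hlmin).2 (hσmin p)
    have hμ2 : μ ≤ lmax / lmin := (div_le_div_iff_of_pos_right hlmin).2 (hσmax p)
    have hb := happrox μ ⟨hμ1, hμ2⟩
    have heq : (σ p)⁻¹ - (1 / lmin) * ∑ j, ω j * Real.exp (-α j * μ)
        = (1 / lmin) * (1 / μ - ∑ j, ω j * Real.exp (-α j * μ)) := by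
      rw [mul_sub]
      congr 1
      rw [hμdef]
      field_simp
    rw [heq, abs_mul, abs_of_pos (by positivity : (0:ℝ) < 1 / lmin)]
    calc 1 / lmin * |1 / μ - ∑ j, ω j * Real.exp (-α j * μ)|
        ≤ 1 / lmin * (ε * lmin / lmax) :=
          mul_le_mul_of_nonneg_left hb (by positivity)
      _ = ε / lmax := by
          field_simp
  have hnorm2 : matInfNorm (D - Dt) ≤ ε / lmax := by
    rw [hD', hDt', Matrix.diagonal_sub, matInfNorm_diagonal']
    exact Finset.sup'_le _ _ fun p _ => key p
  have hnn2 : 0 ≤ matInfNorm (D - Dt) := matInfNorm_nonneg _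
  calc matInfNorm D⁻¹ * matInfNorm (D - Dt) ≤ lmax * (ε / lmax) :=
        mul_le_mul hnorm1 hnorm2 hnn2 hlmax.le
    _ = ε := by field_simp
end
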